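/- Let h : ℕ → ℕ be monotone inflationary, and consider the Hardy hierarchy with H(x) = x+1. Then for all b ≥ 1, c ≥ 1, and x ∈ ℕ, H^{ω^b·c}(x) ≥ 2^c·x. -/

import Mathlib

open Ordinal

/-- The graph of the Hardy hierarchy `h^α` for ordinals `α ≤ ω^ω`, defined with
the standard fundamental sequences `(ω^ω)(x) = ω^(x+1)` and
`(β + ω^(k+1))(x) = β + ω^k·(x+1)` (for `β + ω^(k+1)` in Cantor Normal Form,
i.e. `ω^(k+1) ∣ β`).  `HardyRel h α x y` means `h^α(x) = y`. -/
inductive HardyRel (h : ℕ → ℕ) : Ordinal → ℕ → ℕ → Prop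
  | zero (x : ℕ) : HardyRel h 0 x x
  | succ (α : Ordinal) (x y : ℕ) : HardyRel h α (h x) y → HardyRel h (α + 1) x y
  | top (x y : ℕ) : HardyRel h (omega0 ^ (x + 1 : ℕ)) x y →
      HardyRel h (omega0 ^ omega0) x y
  | limit (β : Ordinal) (k x y : ℕ) : omega0 ^ (k + 1) ∣ β →
      HardyRel h (β + omega0 ^ k * ((x + 1 : ℕ) : Ordinal)) x y →
      HardyRel h (β + omega0 ^ (k + 1)) x y

/-!
Derivations of `HardyRel` are unique, because a limit index `β + ω^(k+1)` with `ω^(k+1) ∣ β`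
determines `β` and `k`. Following the fundamental sequences, `ω^b·c` evaluates to the `c`-th
iterate of `h^(ω^b)`, where `h^(ω^(b+1))(x) = (h^(ω^b))^[x+1](x)`. For `H = (· + 1)` and
`b ≥ 1` we have `H^(ω^b)(x) ≥ H^ω(x) = 2x + 1`, so each of the `c` iterations at least
doubles.
-/

open Order

lemma omega0_npow_pos (k : ℕ) : (0 : Ordinal) < ω ^ k :=
  pos_of_ne_zero (pow_ne_zero k omega0_ne_zero)

lemma isSuccLimit_omega0_npow_succ (k : ℕ) : IsSuccLimit (ω ^ (k + 1) : Ordinal) := by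
  rw [← opow_natCast]
  exact isSuccLimit_opow_left isSuccLimit_omega0 (by exact_mod_cast k.succ_ne_zero)

lemma isSuccLimit_add_omega0_npow_succ (β : Ordinal) (k : ℕ) :
    IsSuccLimit (β + ω ^ (k + 1)) :=
  isSuccLimit_add β (isSuccLimit_omega0_npow_succ k)

lemma isSuccLimit_omega0_opow_omega0 : IsSuccLimit (ω ^ ω : Ordinal) :=
  isSuccLimit_opow_left isSuccLimit_omega0 omega0_ne_zero

lemma add_omega0_npow_succ_ne_omega0_opow_omega0 (β : Ordinal) (k : ℕ) :
    β + ω ^ (k + 1) ≠ ω ^ ω := by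
  rcases lt_or_ge β (ω ^ ω) with hβ | hβ
  · refine (isPrincipal_add_omega0_opow ω hβ ?_).ne
    rw [← opow_natCast]
    exact (opow_lt_opow_iff_right one_lt_omega0).2 (natCast_lt_omega0 _)
  · exact (hβ.trans_lt (lt_add_of_pos_right β (omega0_npow_pos _))).ne'

lemma eq_of_omega0_npow_succ_mul_add_one_eq_of_le {k k' : ℕ} {δ δ' : Ordinal} (hk : k ≤ k')
    (heq : ω ^ (k + 1) * (δ + 1) = ω ^ (k' + 1) * (δ' + 1)) : k = k' := by
  obtain ⟨d, rfl⟩ := Nat.exists_eq_add_of_le hk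
  rcases d with _ | d
  · rfl
  rw [show k + (d + 1) + 1 = k + 1 + (d + 1) by omega, pow_add ω (k + 1), mul_assoc,
    mul_left_cancel_iff_of_pos (omega0_npow_pos _)] at heq
  have hlim : IsSuccLimit (ω ^ (d + 1) * (δ' + 1)) :=
    isSuccLimit_mul_left (isSuccLimit_omega0_npow_succ d) (lt_add_one_iff.2 zero_le)
  exact (not_isSuccLimit_add_one δ (heq ▸ hlim)).elim

lemma add_omega0_npow_succ_inj {β β' : Ordinal} {k k' : ℕ}
    (hβ : ω ^ (k + 1) ∣ β) (hβ' : ω ^ (k' + 1) ∣ β')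
    (heq : β + ω ^ (k + 1) = β' + ω ^ (k' + 1)) : k = k' ∧ β = β' := by
  obtain ⟨δ, rfl⟩ := hβ
  obtain ⟨δ', rfl⟩ := hβ'
  rw [← mul_add_one, ← mul_add_one] at heq
  obtain rfl : k = k' := (le_total k k').elim
    (eq_of_omega0_npow_succ_mul_add_one_eq_of_le · heq)
    (fun hk => (eq_of_omega0_npow_succ_mul_add_one_eq_of_le hk heq.symm).symm)
  rw [mul_left_cancel_iff_of_pos (omega0_npow_pos _), add_one_inj] at heq
  exact ⟨rfl, heq ▸ rfl⟩

/-- `hardyOmegaPow h b` is the Hardy function `h^(ω^b)`. -/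
def hardyOmegaPow (h : ℕ → ℕ) : ℕ → ℕ → ℕ
  | 0 => h
  | b + 1 => fun x => (hardyOmegaPow h b)^[x + 1] x

universe u

namespace HardyRel

variable {h : ℕ → ℕ} {x y : ℕ}

lemma eq_of_zero (hr : HardyRel h 0 x y) : y = x := by
  generalize hα : (0 : Ordinal) = α at hr
  cases hr with
  | zero => rfl
  | succ α => exact absurd hα (lt_add_one_iff.2 zero_le).ne
  | top => exact absurd hα isSuccLimit_omega0_opow_omega0.pos.ne
  | limit β k => exact absurd hα (isSuccLimit_add_omega0_npow_succ β k).pos.ne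

lemma of_add_one {α : Ordinal} (hr : HardyRel h (α + 1) x y) : HardyRel h α (h x) y := by
  generalize hα : α + 1 = γ at hr
  cases hr with
  | zero => exact absurd hα (lt_add_one_iff.2 zero_le).ne'
  | succ α' _ _ hr' => rwa [add_one_inj.1 hα]
  | top => exact (not_isSuccLimit_add_one α (hα ▸ isSuccLimit_omega0_opow_omega0)).elim
  | limit β k =>
    exact (not_isSuccLimit_add_one α (hα ▸ isSuccLimit_add_omega0_npow_succ β k)).elim

lemma of_omega0_opow_omega0 (hr : HardyRel h (ω ^ ω : Ordinal.{u}) x y) :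
    HardyRel h (ω ^ (x + 1 : ℕ) : Ordinal.{u}) x y := by
  generalize hα : ω ^ ω = γ at hr
  cases hr with
  | zero => exact absurd hα isSuccLimit_omega0_opow_omega0.pos.ne'
  | succ α => exact (not_isSuccLimit_add_one α (hα ▸ isSuccLimit_omega0_opow_omega0)).elim
  | top _ _ hr' => exact hr'
  | limit β k => exact absurd hα.symm (add_omega0_npow_succ_ne_omega0_opow_omega0 β k)

lemma of_add_omega0_npow_succ {β : Ordinal} {k : ℕ} (hβ : ω ^ (k + 1) ∣ β)
    (hr : HardyRel h (β + ω ^ (k + 1)) x y) :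
    HardyRel h (β + ω ^ k * ((x + 1 : ℕ) : Ordinal)) x y := by
  generalize hα : β + ω ^ (k + 1) = γ at hr
  cases hr with
  | zero => exact absurd hα (isSuccLimit_add_omega0_npow_succ β k).pos.ne'
  | succ α =>
    exact (not_isSuccLimit_add_one α (hα ▸ isSuccLimit_add_omega0_npow_succ β k)).elim
  | top => exact absurd hα (add_omega0_npow_succ_ne_omega0_opow_omega0 β k)
  | limit β' k' _ _ hβ' hr' =>
    obtain ⟨rfl, rfl⟩ := add_omega0_npow_succ_inj hβ hβ' hα
    exact hr'

theorem functional {α : Ordinal} {z : ℕ} (hy : HardyRel h α x y) (hz : HardyRel h α x z) :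
    y = z := by
  induction hy with
  | zero => exact hz.eq_of_zero.symm
  | succ _ _ _ _ ih => exact ih hz.of_add_one
  | top _ _ _ ih => exact ih hz.of_omega0_opow_omega0
  | limit _ _ _ _ hβ _ ih => exact ih (hz.of_add_omega0_npow_succ hβ)

lemma add_natCast {β : Ordinal} (n : ℕ) (hr : HardyRel h β (h^[n] x) y) :
    HardyRel h (β + n) x y := by
  induction n generalizing x with
  | zero => simpa using hr
  | succ n ih =>
    rw [Nat.cast_succ, ← add_assoc]
    exact .succ _ _ _ (ih (by rwa [← Function.iterate_succ_apply]))

lemma add_omega0_npow_mul (b : ℕ) {β : Ordinal} (m : ℕ) (hβ : ω ^ (b + 1) ∣ β)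
    (hr : HardyRel h β ((hardyOmegaPow h b)^[m] x) y) :
    HardyRel h (β + ω ^ b * m) x y := by
  induction b generalizing β m x with
  | zero =>
    rw [pow_zero, one_mul]
    exact add_natCast m hr
  | succ b ih =>
    induction m generalizing x with
    | zero => simpa using hr
    | succ m ihm =>
      have hβ' : ω ^ (b + 1) ∣ β + ω ^ (b + 1) * m :=
        dvd_add ((pow_dvd_pow ω (b + 1).le_succ).trans hβ) (dvd_mul_right _ _)
      rw [Nat.cast_succ, mul_add_one, ← add_assoc]
      exact .limit _ b x y hβ' (ih _ hβ' (ihm (by rwa [Function.iterate_succ_apply] at hr)))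

lemma omega0_npow_mul (b c x : ℕ) :
    HardyRel h (ω ^ b * c) x ((hardyOmegaPow h b)^[c] x) := by
  simpa using add_omega0_npow_mul b c (dvd_zero _) (.zero _)

end HardyRel

lemma id_le_hardyOmegaPow {h : ℕ → ℕ} (hh : id ≤ h) : ∀ b, id ≤ hardyOmegaPow h b
  | 0 => hh
  | b + 1 => fun x => Function.id_le_iterate_of_id_le (id_le_hardyOmegaPow hh b) (x + 1) x

lemma add_le_iterate_of_lt_apply {h : ℕ → ℕ} (hh : ∀ x, x < h x) (n x : ℕ) :
    x + n ≤ h^[n] x := by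
  induction n generalizing x with
  | zero => rfl
  | succ n ih =>
    rw [Function.iterate_succ_apply]
    linarith [hh x, ih (h x)]

lemma two_mul_add_one_le_hardyOmegaPow {h : ℕ → ℕ} (hh : ∀ x, x < h x) {b : ℕ}
    (hb : 1 ≤ b) (x : ℕ) : 2 * x + 1 ≤ hardyOmegaPow h b x := by
  induction b, hb using Nat.le_induction generalizing x with
  | base =>
    show 2 * x + 1 ≤ h^[x + 1] x
    linarith [add_le_iterate_of_lt_apply hh (x + 1) x]
  | succ b hb ih =>
    calc 2 * x + 1 ≤ hardyOmegaPow h b x := ih x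
      _ ≤ (hardyOmegaPow h b)^[x] (hardyOmegaPow h b x) :=
        Function.id_le_iterate_of_id_le (id_le_hardyOmegaPow (fun y => (hh y).le) b) x _
      _ = hardyOmegaPow h (b + 1) x := (Function.iterate_succ_apply _ _ _).symm

lemma two_pow_mul_le_iterate {f : ℕ → ℕ} (hf : ∀ x, 2 * x ≤ f x) (c x : ℕ) :
    2 ^ c * x ≤ f^[c] x := by
  induction c with
  | zero => simp
  | succ c ih =>
    rw [Function.iterate_succ_apply', pow_succ, mul_comm _ 2, mul_assoc]
    exact (Nat.mul_le_mul_left 2 ih).trans (hf _)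

theorem stmt18_general (b c : ℕ) (hb : 1 ≤ b) :
    ∀ x y, HardyRel (fun n => n + 1) (omega0 ^ b * (c : Ordinal)) x y →
      2 ^ c * x ≤ y := by
  intro x y hr
  rw [← (HardyRel.omega0_npow_mul b c x).functional hr]
  have hdouble (z : ℕ) : 2 * z ≤ hardyOmegaPow (· + 1) b z :=
    (Nat.le_succ _).trans (two_mul_add_one_le_hardyOmegaPow Nat.lt_add_one hb z)
  exact two_pow_mul_le_iterate hdouble c x

/-- For `H(x) = x + 1` and all `b, c ≥ 1` and `x`, `H^(ω^b·c)(x) ≥ 2^c·x`. -/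
theorem stmt18 (h : ℕ → ℕ) (hmono : Monotone h) (hinfl : ∀ x, x ≤ h x)
    (b c : ℕ) (hb : 1 ≤ b) (hc : 1 ≤ c) :
    ∀ x y, HardyRel (fun n => n + 1) (omega0 ^ b * (c : Ordinal)) x y →
      2 ^ c * x ≤ y :=
  stmt18_general b c hb
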